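/- Let n ≥ 1, let B be the open unit ball in ℝⁿ, and let 𝓕 be a nonempty family of homeomorphisms of ℝⁿ onto ℝⁿ that is closed under composition and such that B ⊆ f(B) for every f ∈ 𝓕. Suppose g ∈ 𝓕 satisfies: the Lebesgue measure of g(B) is finite, and volume(f(B)) ≤ volume(g(B)) for all f ∈ 𝓕. Then g(B) = B. -/

import Mathlib

open MeasureTheory

/-!
If `B ⊊ g(B)`, then `g(B) ⊊ g(g(B))`, and because the ball is regular open the difference
`g(g(B)) \ g(B)` contains the nonempty open set `g(g(B) \ closure B)`. Hence `g ∘ g ∈ 𝓕` maps the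
ball onto a set of strictly larger measure than `g(B)`, contradicting maximality.
-/

variable {X : Type*} [TopologicalSpace X]

theorem sdiff_closure_nonempty_of_interior_closure_eq {U V : Set X}
    (hU : interior (closure U) = U) (hV : IsOpen V) (hVU : ¬ V ⊆ U) :
    (V \ closure U).Nonempty := by
  rw [Set.sdiff_nonempty]
  exact fun h ↦ hVU (hU ▸ interior_maximal h hV)

theorem Homeomorph.image_eq_of_measure_image_image_le [MeasurableSpace X]
    [OpensMeasurableSpace X] {μ : Measure X} [μ.IsOpenPosMeasure] (g : X ≃ₜ X) {U : Set X}
    (hU : interior (closure U) = U) (hsub : U ⊆ g '' U) (hfin : μ (g '' U) ≠ ⊤)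
    (hle : μ (g '' (g '' U)) ≤ μ (g '' U)) : g '' U = U := by
  by_contra hne
  set V := g '' U
  have hV : IsOpen V := g.isOpen_image.2 (hU ▸ isOpen_interior)
  have hW : (V \ closure U).Nonempty :=
    sdiff_closure_nonempty_of_interior_closure_eq hU hV fun h ↦ hne (h.antisymm hsub)
  have hgW : g '' (V \ closure U) ⊆ g '' V \ V := by
    rw [Set.image_sdiff g.injective]
    exact Set.sdiff_subset_sdiff_right (Set.image_mono subset_closure)
  have hpos : 0 < μ (g '' V \ V) :=
    ((g.isOpen_image.2 (hV.sdiff isClosed_closure)).measure_pos μ (hW.image g)).trans_le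
      (measure_mono hgW)
  have hlt : μ V < μ (g '' V) := by
    rw [← Set.union_eq_self_of_subset_left (Set.image_mono hsub : V ⊆ g '' V),
      ← measure_add_sdiff hV.measurableSet.nullMeasurableSet]
    exact ENNReal.lt_add_right hfin hpos.ne'
  exact hle.not_gt hlt

theorem stmt_7_general (n : ℕ)
    (B : Set (EuclideanSpace ℝ (Fin n)))
    (hB : B = Metric.ball (0 : EuclideanSpace ℝ (Fin n)) 1)
    (𝓕 : Set (EuclideanSpace ℝ (Fin n) ≃ₜ EuclideanSpace ℝ (Fin n)))
    (hcomp : ∀ f ∈ 𝓕, ∀ g ∈ 𝓕, f.trans g ∈ 𝓕)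
    (hsub : ∀ f ∈ 𝓕, B ⊆ f '' B)
    (g : EuclideanSpace ℝ (Fin n) ≃ₜ EuclideanSpace ℝ (Fin n)) (hg : g ∈ 𝓕)
    (hfin : volume (g '' B) ≠ ⊤)
    (hmax : ∀ f ∈ 𝓕, volume (f '' B) ≤ volume (g '' B)) :
    g '' B = B := by
  have hreg : interior (closure B) = B := by
    rw [hB, closure_ball _ one_ne_zero, interior_closedBall _ one_ne_zero]
  refine g.image_eq_of_measure_image_image_le hreg (hsub g hg) hfin ?_
  rw [Set.image_image]
  exact hmax _ (hcomp g hg g hg)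

theorem stmt_7 (n : ℕ) (hn : 1 ≤ n)
    (B : Set (EuclideanSpace ℝ (Fin n)))
    (hB : B = Metric.ball (0 : EuclideanSpace ℝ (Fin n)) 1)
    (𝓕 : Set (EuclideanSpace ℝ (Fin n) ≃ₜ EuclideanSpace ℝ (Fin n)))
    (hne : 𝓕.Nonempty)
    (hcomp : ∀ f ∈ 𝓕, ∀ g ∈ 𝓕, f.trans g ∈ 𝓕)
    (hsub : ∀ f ∈ 𝓕, B ⊆ f '' B)
    (g : EuclideanSpace ℝ (Fin n) ≃ₜ EuclideanSpace ℝ (Fin n)) (hg : g ∈ 𝓕)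
    (hfin : volume (g '' B) ≠ ⊤)
    (hmax : ∀ f ∈ 𝓕, volume (f '' B) ≤ volume (g '' B)) :
    g '' B = B :=
  stmt_7_general n B hB 𝓕 hcomp hsub g hg hfin hmax
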